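/- Let (x, z, y) be a vertex solution (extreme point) of the polytope P = LP_RRMB(E_X, I_X, E_Y, I_Y, E_Z, L) such that x_e > 0 for every e ∈ E_X, y_e > 0 for every e ∈ E_Y, and z_e > 0 for every e ∈ E_Z. Then there exist nonempty chain families L(x) ⊆ F(x) and L(y) ⊆ F(y) and subsets E(x,z) ⊆ E(x,z)* and E(z,y) ⊆ E(z,y)* such that: (i) |E_X| + |E_Z| + |E_Y| = |L(x)| + |E(x,z)| + |E(z,y)| + |L(y)| + 1; and (ii) the vectors in {χ_X(U) : U ∈ L(x)} ∪ {χ_Y(U) : U ∈ L(y)} ∪ {−χ_X({e}) + χ_Z({e}) : e ∈ E(x,z)} ∪ {χ_Z({e}) − χ_Y({e}) : e ∈ E(z,y)} ∪ {χ_Z(E_Z)} are linearly independent. -/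

import Mathlib

open Finset

/-- A matroid `M = (E, I)` on a finite ground set, given by its finite ground set and
the family of independent sets. -/
structure FinMatroid (α : Type*) [DecidableEq α] where
  /-- the ground set -/
  E : Finset α
  /-- the independence predicate -/
  Indep : Finset α → Prop
  indep_subset_ground : ∀ ⦃A⦄, Indep A → A ⊆ E
  indep_empty : Indep ∅
  indep_subset : ∀ ⦃A B⦄, A ⊆ B → Indep B → Indep A
  indep_exchange : ∀ ⦃A B⦄, Indep A → Indep B → A.card < B.card →
    ∃ e ∈ B \ A, Indep (insert e A)

open scoped Classical in
/-- The rank function of a matroid: `r_M(U) = max {|W| : W ⊆ U, W ∈ I}`. -/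
noncomputable def FinMatroid.rank {α : Type*} [DecidableEq α]
    (M : FinMatroid α) (U : Finset α) : ℕ :=
  ((U.powerset.filter fun W => M.Indep W).image Finset.card).max'
    ⟨0, Finset.mem_image.2 ⟨∅, Finset.mem_filter.2
      ⟨Finset.mem_powerset.2 (Finset.empty_subset U), M.indep_empty⟩,
      Finset.card_empty⟩⟩

/-- The feasible region of the linear program `LP_RRMB(E_X, I_X, E_Y, I_Y, E_Z, L)`,
viewed inside `ℝ^{E_X} × ℝ^{E_Z} × ℝ^{E_Y}` (coordinates outside the respective
ground sets are fixed to `0`). -/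
noncomputable def LP_RRMB {α : Type*} [DecidableEq α]
    (MX MY : FinMatroid α) (EZ : Finset α) (L : ℕ) :
    Set ((α → ℝ) × (α → ℝ) × (α → ℝ)) :=
  {q | (∀ e, 0 ≤ q.1 e) ∧ (∀ e, 0 ≤ q.2.1 e) ∧ (∀ e, 0 ≤ q.2.2 e) ∧
       (∀ e ∉ MX.E, q.1 e = 0) ∧ (∀ e ∉ EZ, q.2.1 e = 0) ∧ (∀ e ∉ MY.E, q.2.2 e = 0) ∧
       (∑ e ∈ MX.E, q.1 e = (MX.rank MX.E : ℝ)) ∧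
       (∀ U : Finset α, U ⊂ MX.E → ∑ e ∈ U, q.1 e ≤ (MX.rank U : ℝ)) ∧
       (∀ e ∈ MX.E ∩ EZ, q.2.1 e ≤ q.1 e) ∧
       (∑ e ∈ EZ, q.2.1 e = (L : ℝ)) ∧
       (∀ e ∈ MY.E ∩ EZ, q.2.1 e ≤ q.2.2 e) ∧
       (∑ e ∈ MY.E, q.2.2 e = (MY.rank MY.E : ℝ)) ∧
       (∀ U : Finset α, U ⊂ MY.E → ∑ e ∈ U, q.2.2 e ≤ (MY.rank U : ℝ))}

/-- The characteristic vector of a finset. -/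
def chi {α : Type*} [DecidableEq α] (S : Finset α) : α → ℝ :=
  fun e => if e ∈ S then 1 else 0

/-- A family of sets is a chain if any two of its members are comparable
under inclusion. -/
def ChainFamily {α : Type*} (𝒜 : Finset (Finset α)) : Prop :=
  ∀ A ∈ 𝒜, ∀ B ∈ 𝒜, A ⊆ B ∨ B ⊆ A

/-! At a vertex `p`, a direction `d` supported on the ground sets that keeps every tight
constraint tight must vanish: all other constraints have slack (the coordinates are positive),
so `p ± t • d` stays feasible for small `t`, and `p` is their midpoint. Dually, the vectors of
the tight constraints span the whole space of such directions, of dimension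
`|E_X| + |E_Z| + |E_Y|`. By submodularity the tight sets of `x` are closed under `∪` and `∩`,
so the tight sets of a maximal chain already span all of them (uncrossing). A basis extracted
from the chain vectors, the tight coupling vectors and `χ_Z(E_Z)`, started from the independent
triple `χ_X(E_X)`, `χ_Y(E_Y)`, `χ_Z(E_Z)`, gives the required families. -/

open Filter Topology

theorem eventually_add_mul_le_add_mul {a b c d : ℝ} (h : a ≤ c) (ht : a = c → b = d) :
    ∀ᶠ t in 𝓝 (0 : ℝ), a + t * b ≤ c + t * d := by
  rcases h.lt_or_eq with h | h
  · have hlim : ∀ u v : ℝ, Tendsto (fun t : ℝ => u + t * v) (𝓝 0) (𝓝 u) := fun u v => by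
      simpa using ((by fun_prop : Continuous fun t : ℝ => u + t * v).tendsto 0)
    exact ((hlim a b).eventually_lt (hlim c d) h).mono fun _ => le_of_lt
  · exact Eventually.of_forall fun t => by rw [h, ht h]

theorem eq_zero_of_eventually_add_smul_mem {E : Type*} [AddCommGroup E] [Module ℝ E]
    {A : Set E} {p d : E} (hp : p ∈ A.extremePoints ℝ)
    (hd : ∀ᶠ t in 𝓝 (0 : ℝ), p + t • d ∈ A) : d = 0 := by
  obtain ⟨ε, hε, hball⟩ := Metric.eventually_nhds_iff.1 hd
  have hmem : ∀ s : ℝ, |s| < ε → p + s • d ∈ A := fun s hs => hball (by simpa using hs)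
  have hs : |ε / 2| < ε := by rw [abs_of_pos (half_pos hε)]; linarith
  have hsub : p - (ε / 2) • d ∈ A := by
    simpa [neg_smul, ← sub_eq_add_neg] using hmem (-(ε / 2)) (by rwa [abs_neg])
  have heq := ((mem_extremePoints.1 hp).2 _ hsub _ (hmem _ hs)
    (mem_openSegment_sub_add p ((ε / 2) • d))).2
  simpa [(half_pos hε).ne'] using heq

theorem Submodule.span_eq_of_forall_pairing_eq_zero {K M : Type*} [Field K] [AddCommGroup M]
    [Module K M] (V : Submodule K M) [FiniteDimensional K V] (Φ : M →ₗ[K] M →ₗ[K] K)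
    {T : Set M} (hTV : T ⊆ V) (h : ∀ d ∈ V, (∀ t ∈ T, Φ d t = 0) → d = 0) :
    span K T = V := by
  set W := span K T
  have hWV : W ≤ V := span_le.2 hTV
  have : FiniteDimensional K W := finiteDimensional_of_le hWV
  set g : V →ₗ[K] Module.Dual K W := (Φ.compl₂ W.subtype).comp V.subtype
  have hg : Function.Injective g := by
    refine (injective_iff_map_eq_zero g).2 fun d hd => Subtype.ext (h d d.2 fun t ht => ?_)
    exact LinearMap.congr_fun hd ⟨t, subset_span ht⟩
  refine eq_of_le_of_finrank_le hWV ?_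
  simpa [Subspace.dual_finrank_eq] using LinearMap.finrank_le_finrank_of_injective hg

section SupportSubspace

variable {α : Type*}

theorem mem_range_extendByZero {s : Finset α} {f : α → ℝ} :
    f ∈ LinearMap.range (Function.ExtendByZero.linearMap ℝ ((↑) : s → α)) ↔
      ∀ e ∉ s, f e = 0 := by
  constructor
  · rintro ⟨g, rfl⟩ e he
    exact Function.extend_apply' _ _ _ fun ⟨a, ha⟩ => he (ha ▸ a.2)
  · refine fun h => ⟨fun e => f e, funext fun e => ?_⟩
    rw [Function.ExtendByZero.linearMap_apply]
    by_cases he : e ∈ s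
    · exact Subtype.val_injective.extend_apply (fun e : s => f e) 0 ⟨e, he⟩
    · have hne : ¬∃ a : s, (a : α) = e := fun ⟨a, ha⟩ => he (ha ▸ a.2)
      exact (Function.extend_apply' _ (0 : α → ℝ) e hne).trans (h e he).symm

/-- Defined as a range, so that its dimension is that of `(EX → ℝ) × (EZ → ℝ) × (EY → ℝ)`. -/
noncomputable def supportSubspace (EX EZ EY : Finset α) :
    Submodule ℝ ((α → ℝ) × (α → ℝ) × (α → ℝ)) :=
  LinearMap.range ((Function.ExtendByZero.linearMap ℝ ((↑) : EX → α)).prodMap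
    ((Function.ExtendByZero.linearMap ℝ ((↑) : EZ → α)).prodMap
      (Function.ExtendByZero.linearMap ℝ ((↑) : EY → α))))

variable {EX EZ EY : Finset α}

instance : FiniteDimensional ℝ (supportSubspace EX EZ EY) :=
  LinearMap.finiteDimensional_range _

theorem mem_supportSubspace {q : (α → ℝ) × (α → ℝ) × (α → ℝ)} :
    q ∈ supportSubspace EX EZ EY ↔
      (∀ e ∉ EX, q.1 e = 0) ∧ (∀ e ∉ EZ, q.2.1 e = 0) ∧ ∀ e ∉ EY, q.2.2 e = 0 := by
  simp only [supportSubspace, LinearMap.range_prodMap, Submodule.mem_prod,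
    mem_range_extendByZero]

theorem finrank_supportSubspace :
    Module.finrank ℝ (supportSubspace EX EZ EY) = EX.card + EZ.card + EY.card := by
  have hinj : ∀ s : Finset α,
      Function.Injective (Function.ExtendByZero.linearMap ℝ ((↑) : s → α)) :=
    fun s => Function.extend_injective Subtype.val_injective (0 : α → ℝ)
  rw [supportSubspace, LinearMap.finrank_range_of_inj, Module.finrank_prod,
    Module.finrank_prod]
  · simp only [Module.finrank_fintype_fun_eq_card, Fintype.card_coe, add_assoc]
  · rw [LinearMap.coe_prodMap, LinearMap.coe_prodMap]
    exact (hinj EX).prodMap ((hinj EZ).prodMap (hinj EY))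

end SupportSubspace

namespace FinMatroid

variable {α : Type*} [DecidableEq α] (M : FinMatroid α)

theorem card_le_rank {U W : Finset α} (hWU : W ⊆ U) (hW : M.Indep W) : W.card ≤ M.rank U := by
  classical
  exact le_max' _ _ (mem_image.2 ⟨W, mem_filter.2 ⟨mem_powerset.2 hWU, hW⟩, rfl⟩)

theorem exists_indep_card_eq_rank (U : Finset α) :
    ∃ W ⊆ U, M.Indep W ∧ W.card = M.rank U := by
  classical
  obtain ⟨W, hW, hcard⟩ := mem_image.1 (max'_mem _ _ :
    M.rank U ∈ (U.powerset.filter fun W => M.Indep W).image card)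
  rw [mem_filter, mem_powerset] at hW
  exact ⟨W, hW.1, hW.2, hcard⟩

theorem exists_indep_superset_card_eq_rank {U A : Finset α} (hAU : A ⊆ U) (hA : M.Indep A) :
    ∃ W, A ⊆ W ∧ W ⊆ U ∧ M.Indep W ∧ W.card = M.rank U := by
  classical
  obtain ⟨W, hW, hmax⟩ := exists_max_image
    (U.powerset.filter fun W => A ⊆ W ∧ M.Indep W) card ⟨A, by simp [hAU, hA]⟩
  simp only [mem_filter, mem_powerset] at hW hmax
  obtain ⟨hWU, hAW, hWI⟩ := hW
  refine ⟨W, hAW, hWU, hWI, (M.card_le_rank hWU hWI).antisymm (not_lt.1 fun hlt => ?_)⟩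
  obtain ⟨B, hBU, hBI, hB⟩ := M.exists_indep_card_eq_rank U
  obtain ⟨e, he, heW⟩ := M.indep_exchange hWI hBI (hB ▸ hlt)
  rw [Finset.mem_sdiff] at he
  have := hmax (insert e W) ⟨insert_subset (hBU he.1) hWU, hAW.trans (subset_insert e W), heW⟩
  rw [card_insert_of_notMem he.2] at this
  omega

theorem rank_union_add_rank_inter_le (U V : Finset α) :
    M.rank (U ∪ V) + M.rank (U ∩ V) ≤ M.rank U + M.rank V := by
  obtain ⟨A, hAI, hA, hAcard⟩ := M.exists_indep_card_eq_rank (U ∩ V)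
  obtain ⟨B, hAB, hBUV, hB, hBcard⟩ :=
    M.exists_indep_superset_card_eq_rank (hAI.trans inter_subset_union) hA
  have hU : (B ∩ U).card ≤ M.rank U :=
    M.card_le_rank inter_subset_right (M.indep_subset inter_subset_left hB)
  have hV : (B ∩ V).card ≤ M.rank V :=
    M.card_le_rank inter_subset_right (M.indep_subset inter_subset_left hB)
  have hcard : (B ∩ U).card + (B ∩ V).card = B.card + (B ∩ (U ∩ V)).card := by
    rw [← card_union_add_card_inter, ← inter_union_distrib_left, inter_eq_left.2 hBUV,
      ← inter_inter_distrib_left]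
  have hA' : A.card ≤ (B ∩ (U ∩ V)).card := card_le_card (subset_inter hAB hAI)
  omega

def basePolytope : Set (α → ℝ) :=
  {x | (∀ e, 0 ≤ x e) ∧ (∀ e ∉ M.E, x e = 0) ∧ ∑ e ∈ M.E, x e = M.rank M.E ∧
    ∀ U ⊂ M.E, ∑ e ∈ U, x e ≤ M.rank U}

noncomputable def tightSets (x : α → ℝ) : Finset (Finset α) :=
  M.E.powerset.filter fun U => ∑ e ∈ U, x e = M.rank U

variable {M} {x : α → ℝ} {U V : Finset α}

theorem mem_tightSets : U ∈ M.tightSets x ↔ U ⊆ M.E ∧ ∑ e ∈ U, x e = M.rank U := by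
  rw [tightSets, mem_filter, mem_powerset]

theorem sum_le_rank_of_mem_basePolytope (hx : x ∈ M.basePolytope) (hU : U ⊆ M.E) :
    ∑ e ∈ U, x e ≤ M.rank U := by
  rcases hU.eq_or_ssubset with rfl | hU
  exacts [hx.2.2.1.le, hx.2.2.2 U hU]

theorem union_mem_tightSets_and_inter (hx : x ∈ M.basePolytope) (hU : U ∈ M.tightSets x)
    (hV : V ∈ M.tightSets x) : U ∪ V ∈ M.tightSets x ∧ U ∩ V ∈ M.tightSets x := by
  simp only [mem_tightSets] at hU hV ⊢
  have hUV : U ∪ V ⊆ M.E := union_subset hU.1 hV.1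
  have hUV' : U ∩ V ⊆ M.E := inter_subset_left.trans hU.1
  have hsub : (M.rank (U ∪ V) : ℝ) + M.rank (U ∩ V) ≤ M.rank U + M.rank V := by
    exact_mod_cast M.rank_union_add_rank_inter_le U V
  have hsum : ∑ e ∈ U ∪ V, x e + ∑ e ∈ U ∩ V, x e = ∑ e ∈ U, x e + ∑ e ∈ V, x e :=
    sum_union_inter
  have h₁ := sum_le_rank_of_mem_basePolytope hx hUV
  have h₂ := sum_le_rank_of_mem_basePolytope hx hUV'
  exact ⟨⟨hUV, by linarith⟩, ⟨hUV', by linarith⟩⟩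

theorem eventually_add_smul_mem_basePolytope {d : α → ℝ} (hx : x ∈ M.basePolytope)
    (hpos : ∀ e ∈ M.E, 0 < x e) (hd : ∀ e ∉ M.E, d e = 0)
    (htight : ∀ U ∈ M.tightSets x, ∑ e ∈ U, d e = 0) :
    ∀ᶠ t in 𝓝 (0 : ℝ), x + t • d ∈ M.basePolytope := by
  have hE : ∑ e ∈ M.E, d e = 0 := htight _ (mem_tightSets.2 ⟨subset_rfl, hx.2.2.1⟩)
  have hnonneg : ∀ᶠ t in 𝓝 (0 : ℝ), ∀ e ∈ M.E, 0 + t * 0 ≤ x e + t * d e :=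
    (eventually_all_finset _).2 fun e he =>
      eventually_add_mul_le_add_mul (hpos e he).le fun h => ((hpos e he).ne h).elim
  have hrank : ∀ᶠ t in 𝓝 (0 : ℝ), ∀ U ∈ M.E.powerset,
      ∑ e ∈ U, x e + t * ∑ e ∈ U, d e ≤ M.rank U + t * 0 :=
    (eventually_all_finset _).2 fun U hU =>
      eventually_add_mul_le_add_mul (sum_le_rank_of_mem_basePolytope hx (mem_powerset.1 hU))
        fun h => htight U (mem_tightSets.2 ⟨mem_powerset.1 hU, h⟩)
  filter_upwards [hnonneg, hrank] with t hn hr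
  refine ⟨fun e => ?_, fun e he => ?_, ?_, fun U hU => ?_⟩
  · by_cases he : e ∈ M.E
    · simpa using hn e he
    · simp [hx.2.1 e he, hd e he]
  · simp [hx.2.1 e he, hd e he]
  · simp [sum_add_distrib, ← mul_sum, hE, hx.2.2.1]
  · simpa [sum_add_distrib, ← mul_sum] using hr U (mem_powerset.2 hU.subset)

end FinMatroid

section Uncrossing

variable {α : Type*}

theorem exists_maximal_chainFamily (F : Finset (Finset α)) :
    ∃ C, Maximal (fun C => C ⊆ F ∧ ChainFamily C) C :=
  ((F.powerset : Set (Finset (Finset α))).toFinite.subset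
      fun _ hC => mem_powerset.2 hC.1).exists_maximal
    ⟨∅, empty_subset F, fun _ h => absurd h (notMem_empty _)⟩

variable [DecidableEq α] {F C : Finset (Finset α)} {U T : Finset α}

theorem ChainFamily.insert (hC : ChainFamily C) (hU : ∀ A ∈ C, A ⊆ U ∨ U ⊆ A) :
    ChainFamily (insert U C) := by
  simp only [ChainFamily, mem_insert]
  rintro A (rfl | hA) B (rfl | hB)
  exacts [Or.inl subset_rfl, (hU B hB).symm, hU A hA, hC A hA B hB]

def crossing (C : Finset (Finset α)) (U : Finset α) : Finset (Finset α) :=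
  C.filter fun A => ¬(A ⊆ U ∨ U ⊆ A)

theorem crossing_union_ssubset (hC : ChainFamily C) (hT : T ∈ crossing C U) :
    crossing C (U ∪ T) ⊂ crossing C U := by
  obtain ⟨hTC, hTU⟩ := mem_filter.1 hT
  refine (ssubset_iff_of_subset fun S hS => ?_).2 ⟨T, hT, fun h => ?_⟩
  · obtain ⟨hSC, hSUT⟩ := mem_filter.1 hS
    refine mem_filter.2 ⟨hSC, fun hSU => hSUT ?_⟩
    rcases hC S hSC T hTC with hST | hTS
    · exact Or.inl (hST.trans subset_union_right)
    · exact hSU.imp (·.trans subset_union_left) (union_subset · hTS)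
  · exact (mem_filter.1 h).2 (Or.inl subset_union_right)

theorem crossing_inter_ssubset (hC : ChainFamily C) (hT : T ∈ crossing C U) :
    crossing C (U ∩ T) ⊂ crossing C U := by
  obtain ⟨hTC, hTU⟩ := mem_filter.1 hT
  refine (ssubset_iff_of_subset fun S hS => ?_).2 ⟨T, hT, fun h => ?_⟩
  · obtain ⟨hSC, hSUT⟩ := mem_filter.1 hS
    refine mem_filter.2 ⟨hSC, fun hSU => hSUT ?_⟩
    rcases hC S hSC T hTC with hST | hTS
    · exact hSU.imp (subset_inter · hST) fun hUS => (hTU (Or.inr (hUS.trans hST))).elim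
    · exact Or.inr (inter_subset_right.trans hTS)
  · exact (mem_filter.1 h).2 (Or.inr inter_subset_right)

theorem Maximal.mem_of_forall_comparable (hC : Maximal (fun C => C ⊆ F ∧ ChainFamily C) C)
    (hU : U ∈ F) (hcomp : ∀ A ∈ C, A ⊆ U ∨ U ⊆ A) : U ∈ C :=
  hC.2 ⟨insert_subset hU hC.1.1, hC.1.2.insert hcomp⟩ (subset_insert U C) (mem_insert_self U C)

theorem Maximal.eq_zero_of_modular {M : Type*} [AddCommGroup M]
    (hC : Maximal (fun C => C ⊆ F ∧ ChainFamily C) C)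
    (hF : ∀ U ∈ F, ∀ V ∈ F, U ∪ V ∈ F ∧ U ∩ V ∈ F) {f : Finset α → M}
    (hf : ∀ U V, f (U ∪ V) + f (U ∩ V) = f U + f V) (hfC : ∀ U ∈ C, f U = 0) :
    ∀ U ∈ F, f U = 0 := by
  intro U hU
  induction hn : (crossing C U).card using Nat.strong_induction_on generalizing U with
  | _ n ih =>
    obtain ⟨T, hT⟩ | hcross := (crossing C U).eq_empty_or_nonempty.symm
    · have hTC := (mem_filter.1 hT).1
      have hunion := ih _ (hn ▸ card_lt_card (crossing_union_ssubset hC.1.2 hT)) _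
        (hF U hU T (hC.1.1 hTC)).1 rfl
      have hinter := ih _ (hn ▸ card_lt_card (crossing_inter_ssubset hC.1.2 hT)) _
        (hF U hU T (hC.1.1 hTC)).2 rfl
      simpa [hunion, hinter, hfC T hTC] using (hf U T).symm
    · refine hfC U (hC.mem_of_forall_comparable hU fun A hA => ?_)
      by_contra h
      exact (eq_empty_iff_forall_notMem.1 hcross) A (mem_filter.2 ⟨hA, h⟩)

end Uncrossing

theorem ChainFamily.mono {α : Type*} {C D : Finset (Finset α)} (hC : ChainFamily C)
    (hDC : D ⊆ C) : ChainFamily D :=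
  fun A hA B hB => hC A (hDC hA) B (hDC hB)

theorem FinMatroid.ground_mem_of_maximal {α : Type*} [DecidableEq α] {M : FinMatroid α}
    {x : α → ℝ} {C : Finset (Finset α)} (hx : x ∈ M.basePolytope)
    (hC : Maximal (fun C => C ⊆ M.tightSets x ∧ ChainFamily C) C) : M.E ∈ C :=
  hC.mem_of_forall_comparable (mem_tightSets.2 ⟨subset_rfl, hx.2.2.1⟩)
    fun _ hA => Or.inl (mem_tightSets.1 (hC.1.1 hA)).1

section LP

variable {α : Type*} [DecidableEq α] {MX MY : FinMatroid α} {EZ : Finset α} {L : ℕ}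
  {x z y : α → ℝ}

theorem mem_LP_RRMB_iff : (x, z, y) ∈ LP_RRMB MX MY EZ L ↔
    x ∈ MX.basePolytope ∧ y ∈ MY.basePolytope ∧ (∀ e, 0 ≤ z e) ∧ (∀ e ∉ EZ, z e = 0) ∧
      ∑ e ∈ EZ, z e = L ∧ (∀ e ∈ MX.E ∩ EZ, z e ≤ x e) ∧ ∀ e ∈ MY.E ∩ EZ, z e ≤ y e := by
  simp only [LP_RRMB, FinMatroid.basePolytope, Set.mem_ofPred_eq]
  tauto

theorem LP_RRMB.eq_zero_of_tight (hvert : (x, z, y) ∈ (LP_RRMB MX MY EZ L).extremePoints ℝ)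
    (hx : ∀ e ∈ MX.E, 0 < x e) (hy : ∀ e ∈ MY.E, 0 < y e) (hz : ∀ e ∈ EZ, 0 < z e)
    {d : (α → ℝ) × (α → ℝ) × (α → ℝ)} (hd : d ∈ supportSubspace MX.E EZ MY.E)
    (hdx : ∀ U ∈ MX.tightSets x, ∑ e ∈ U, d.1 e = 0)
    (hdxz : ∀ e ∈ MX.E ∩ EZ, z e = x e → d.2.1 e = d.1 e) (hdz : ∑ e ∈ EZ, d.2.1 e = 0)
    (hdzy : ∀ e ∈ MY.E ∩ EZ, z e = y e → d.2.1 e = d.2.2 e)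
    (hdy : ∀ U ∈ MY.tightSets y, ∑ e ∈ U, d.2.2 e = 0) : d = 0 := by
  obtain ⟨hxP, hyP, -, hz0, hzsum, hzx, hzy⟩ := mem_LP_RRMB_iff.1 hvert.1
  obtain ⟨hdX, hdZ, hdY⟩ := mem_supportSubspace.1 hd
  have hzpos : ∀ᶠ t in 𝓝 (0 : ℝ), ∀ e ∈ EZ, 0 + t * 0 ≤ z e + t * d.2.1 e :=
    (eventually_all_finset _).2 fun e he =>
      eventually_add_mul_le_add_mul (hz e he).le fun h => ((hz e he).ne h).elim
  have hzx' : ∀ᶠ t in 𝓝 (0 : ℝ), ∀ e ∈ MX.E ∩ EZ, z e + t * d.2.1 e ≤ x e + t * d.1 e :=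
    (eventually_all_finset _).2 fun e he => eventually_add_mul_le_add_mul (hzx e he) (hdxz e he)
  have hzy' : ∀ᶠ t in 𝓝 (0 : ℝ), ∀ e ∈ MY.E ∩ EZ, z e + t * d.2.1 e ≤ y e + t * d.2.2 e :=
    (eventually_all_finset _).2 fun e he => eventually_add_mul_le_add_mul (hzy e he) (hdzy e he)
  refine eq_zero_of_eventually_add_smul_mem hvert ?_
  filter_upwards [FinMatroid.eventually_add_smul_mem_basePolytope hxP hx hdX hdx,
    FinMatroid.eventually_add_smul_mem_basePolytope hyP hy hdY hdy, hzpos, hzx', hzy']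
    with t htx hty htz htzx htzy
  refine mem_LP_RRMB_iff.2 ⟨htx, hty, fun e => ?_, fun e he => ?_, ?_, htzx, htzy⟩
  · by_cases he : e ∈ EZ
    · simpa using htz e he
    · simp [hz0 e he, hdZ e he]
  · simp [hz0 e he, hdZ e he]
  · simp [sum_add_distrib, ← mul_sum, hdz, hzsum]

end LP

section Chi

variable {α : Type*} [DecidableEq α]

theorem sum_mul_chi {s U : Finset α} (hU : U ⊆ s) (f : α → ℝ) :
    ∑ e ∈ s, f e * chi U e = ∑ e ∈ U, f e := by
  simp only [chi, mul_ite, mul_one, mul_zero, sum_ite_mem, inter_eq_right.2 hU]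

theorem chi_ne_zero {s : Finset α} (hs : s.Nonempty) : chi s ≠ 0 := fun h => by
  obtain ⟨e, he⟩ := hs
  simpa [chi, he] using congrFun h e

end Chi

section DotForm

variable {α : Type*}

/-- The pairing under which each constraint vector of `LP_RRMB` evaluates the left-hand side
of its constraint. -/
noncomputable def dotForm (EX EZ EY : Finset α) :
    ((α → ℝ) × (α → ℝ) × (α → ℝ)) →ₗ[ℝ] ((α → ℝ) × (α → ℝ) × (α → ℝ)) →ₗ[ℝ] ℝ :=
  LinearMap.mk₂ ℝ
    (fun p q => ∑ e ∈ EX, p.1 e * q.1 e + ∑ e ∈ EZ, p.2.1 e * q.2.1 e +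
      ∑ e ∈ EY, p.2.2 e * q.2.2 e)
    (fun _ _ _ => by simp only [Prod.fst_add, Prod.snd_add, Pi.add_apply, add_mul,
      sum_add_distrib]; ring)
    (fun _ _ _ => by simp only [Prod.smul_fst, Prod.smul_snd, Pi.smul_apply, smul_eq_mul,
      mul_assoc, ← mul_sum]; ring)
    (fun _ _ _ => by simp only [Prod.fst_add, Prod.snd_add, Pi.add_apply, mul_add,
      sum_add_distrib]; ring)
    (fun _ _ _ => by simp only [Prod.smul_fst, Prod.smul_snd, Pi.smul_apply, smul_eq_mul,
      mul_left_comm _ (_ : ℝ), ← mul_sum]; ring)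

theorem dotForm_apply (EX EZ EY : Finset α) (p q : (α → ℝ) × (α → ℝ) × (α → ℝ)) :
    dotForm EX EZ EY p q = ∑ e ∈ EX, p.1 e * q.1 e + ∑ e ∈ EZ, p.2.1 e * q.2.1 e +
      ∑ e ∈ EY, p.2.2 e * q.2.2 e := rfl

end DotForm

section RowIndices

variable {α : Type*}

def rowIndices (Lx Ly : Finset (Finset α)) (Exz Ezy : Finset α) :
    Set (Finset α ⊕ Finset α ⊕ α ⊕ α ⊕ Unit) :=
  {i | Sum.elim (· ∈ Lx) (Sum.elim (· ∈ Ly) (Sum.elim (· ∈ Exz) (Sum.elim (· ∈ Ezy)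
    fun _ => True))) i}

def rowEmbedding (Lx Ly : Finset (Finset α)) (Exz Ezy : Finset α) :
    {U // U ∈ Lx} ⊕ {U // U ∈ Ly} ⊕ {e // e ∈ Exz} ⊕ {e // e ∈ Ezy} ⊕ Unit →
      Finset α ⊕ Finset α ⊕ α ⊕ α ⊕ Unit :=
  Sum.map Subtype.val <| Sum.map Subtype.val <| Sum.map Subtype.val <| Sum.map Subtype.val id

variable {Lx Ly : Finset (Finset α)} {Exz Ezy : Finset α}

theorem rowEmbedding_injective : Function.Injective (rowEmbedding Lx Ly Exz Ezy) :=
  Subtype.val_injective.sumMap <| Subtype.val_injective.sumMap <|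
    Subtype.val_injective.sumMap <| Subtype.val_injective.sumMap Function.injective_id

theorem range_rowEmbedding :
    Set.range (rowEmbedding Lx Ly Exz Ezy) = rowIndices Lx Ly Exz Ezy := by
  ext (U | U | e | e | u) <;> simp [rowEmbedding, rowIndices]

theorem exists_rowIndices_eq {I : Set (Finset α ⊕ Finset α ⊕ α ⊕ α ⊕ Unit)}
    (hI : I ⊆ rowIndices Lx Ly Exz Ezy) (hunit : .inr (.inr (.inr (.inr ()))) ∈ I) :
    ∃ Lx' ⊆ Lx, ∃ Ly' ⊆ Ly, ∃ Exz' ⊆ Exz, ∃ Ezy' ⊆ Ezy, rowIndices Lx' Ly' Exz' Ezy' = I := by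
  classical
  refine ⟨Lx.filter fun U => .inl U ∈ I, filter_subset _ _,
    Ly.filter fun U => .inr (.inl U) ∈ I, filter_subset _ _,
    Exz.filter fun e => .inr (.inr (.inl e)) ∈ I, filter_subset _ _,
    Ezy.filter fun e => .inr (.inr (.inr (.inl e))) ∈ I, filter_subset _ _, ?_⟩
  ext (U | U | e | e | u) <;>
    simp only [rowIndices, Set.mem_ofPred_eq, Sum.elim_inl, Sum.elim_inr, mem_filter, true_iff,
      and_iff_right_iff_imp]
  all_goals first | exact fun h => hI h | exact hunit

end RowIndices

section ConstraintRows

variable {α : Type*} [DecidableEq α]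

def constraintRow (EZ : Finset α) :
    Finset α ⊕ Finset α ⊕ α ⊕ α ⊕ Unit → (α → ℝ) × (α → ℝ) × (α → ℝ) :=
  Sum.elim (fun U => (chi U, 0, 0)) <| Sum.elim (fun U => (0, 0, chi U)) <|
    Sum.elim (fun e => (-chi {e}, chi {e}, 0)) <| Sum.elim (fun e => (0, chi {e}, -chi {e}))
      fun _ => (0, chi EZ, 0)

variable {EX EZ EY : Finset α} {Lx Ly : Finset (Finset α)} {Exz Ezy : Finset α}

theorem constraintRow_image_subset_supportSubspace (hLx : ∀ U ∈ Lx, U ⊆ EX)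
    (hLy : ∀ U ∈ Ly, U ⊆ EY) (hExz : Exz ⊆ EX ∩ EZ) (hEzy : Ezy ⊆ EY ∩ EZ) :
    constraintRow EZ '' rowIndices Lx Ly Exz Ezy ⊆ supportSubspace EX EZ EY := by
  rintro _ ⟨U | U | e | e | u, hi, rfl⟩ <;>
    simp only [rowIndices, Set.mem_ofPred_eq, Sum.elim_inl, Sum.elim_inr] at hi <;>
    simp only [constraintRow, Sum.elim_inl, Sum.elim_inr, SetLike.mem_coe, mem_supportSubspace]
  all_goals refine ⟨fun a ha => ?_, fun a ha => ?_, fun a ha => ?_⟩ <;>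
    simp only [Pi.zero_apply, Pi.neg_apply, chi, neg_eq_zero, ite_eq_right_iff, one_ne_zero,
      imp_false, mem_singleton]
  all_goals grind

variable {d : (α → ℝ) × (α → ℝ) × (α → ℝ)}

theorem dotForm_constraintRow_inl {U : Finset α} (hU : U ⊆ EX) :
    dotForm EX EZ EY d (constraintRow EZ (.inl U)) = ∑ e ∈ U, d.1 e := by
  simp [dotForm_apply, constraintRow, sum_mul_chi hU]

theorem dotForm_constraintRow_inr_inl {U : Finset α} (hU : U ⊆ EY) :
    dotForm EX EZ EY d (constraintRow EZ (.inr (.inl U))) = ∑ e ∈ U, d.2.2 e := by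
  simp [dotForm_apply, constraintRow, sum_mul_chi hU]

theorem dotForm_constraintRow_inr_inr_inl {e : α} (he : e ∈ EX ∩ EZ) :
    dotForm EX EZ EY d (constraintRow EZ (.inr (.inr (.inl e)))) = d.2.1 e - d.1 e := by
  rw [mem_inter, ← singleton_subset_iff, ← singleton_subset_iff] at he
  simp [dotForm_apply, constraintRow, sum_mul_chi he.1, sum_mul_chi he.2, neg_add_eq_sub]

theorem dotForm_constraintRow_inr_inr_inr_inl {e : α} (he : e ∈ EY ∩ EZ) :
    dotForm EX EZ EY d (constraintRow EZ (.inr (.inr (.inr (.inl e))))) = d.2.1 e - d.2.2 e := by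
  rw [mem_inter, ← singleton_subset_iff, ← singleton_subset_iff] at he
  simp [dotForm_apply, constraintRow, sum_mul_chi he.1, sum_mul_chi he.2, sub_eq_add_neg]

theorem dotForm_constraintRow_unit :
    dotForm EX EZ EY d (constraintRow EZ (.inr (.inr (.inr (.inr ()))))) = ∑ e ∈ EZ, d.2.1 e := by
  simp [dotForm_apply, constraintRow, sum_mul_chi subset_rfl]

variable {MX MY : FinMatroid α} {L : ℕ} {x z y : α → ℝ}

theorem span_constraintRow_eq_supportSubspace {CX CY : Finset (Finset α)}
    (hvert : (x, z, y) ∈ (LP_RRMB MX MY EZ L).extremePoints ℝ)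
    (hx : ∀ e ∈ MX.E, 0 < x e) (hy : ∀ e ∈ MY.E, 0 < y e) (hz : ∀ e ∈ EZ, 0 < z e)
    (hCX : Maximal (fun C => C ⊆ MX.tightSets x ∧ ChainFamily C) CX)
    (hCY : Maximal (fun C => C ⊆ MY.tightSets y ∧ ChainFamily C) CY) :
    Submodule.span ℝ (constraintRow EZ '' rowIndices CX CY
      ((MX.E ∩ EZ).filter fun e => z e = x e) ((MY.E ∩ EZ).filter fun e => z e = y e)) =
      supportSubspace MX.E EZ MY.E := by
  obtain ⟨hxP, hyP, -⟩ := mem_LP_RRMB_iff.1 hvert.1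
  have hCXE : ∀ U ∈ CX, U ⊆ MX.E := fun U hU => (FinMatroid.mem_tightSets.1 (hCX.1.1 hU)).1
  have hCYE : ∀ U ∈ CY, U ⊆ MY.E := fun U hU => (FinMatroid.mem_tightSets.1 (hCY.1.1 hU)).1
  refine Submodule.span_eq_of_forall_pairing_eq_zero _ (dotForm MX.E EZ MY.E)
    (constraintRow_image_subset_supportSubspace hCXE hCYE (filter_subset _ _)
      (filter_subset _ _)) fun d hd horth => ?_
  have hrow : ∀ i ∈ rowIndices CX CY ((MX.E ∩ EZ).filter fun e => z e = x e)
      ((MY.E ∩ EZ).filter fun e => z e = y e), dotForm MX.E EZ MY.E d (constraintRow EZ i) = 0 :=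
    fun i hi => horth _ ⟨i, hi, rfl⟩
  refine LP_RRMB.eq_zero_of_tight hvert hx hy hz hd ?_ (fun e he hze => ?_) ?_
    (fun e he hze => ?_) ?_
  · exact hCX.eq_zero_of_modular
      (fun U hU V hV => FinMatroid.union_mem_tightSets_and_inter hxP hU hV)
      (fun U V => sum_union_inter) fun U hU =>
        (dotForm_constraintRow_inl (hCXE U hU)).symm.trans (hrow (.inl U) hU)
  · exact sub_eq_zero.1 ((dotForm_constraintRow_inr_inr_inl he).symm.trans
      (hrow (.inr (.inr (.inl e))) (mem_filter.2 ⟨he, hze⟩)))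
  · exact dotForm_constraintRow_unit.symm.trans (hrow (.inr (.inr (.inr (.inr ())))) trivial)
  · exact sub_eq_zero.1 ((dotForm_constraintRow_inr_inr_inr_inl he).symm.trans
      (hrow (.inr (.inr (.inr (.inl e)))) (mem_filter.2 ⟨he, hze⟩)))
  · exact hCY.eq_zero_of_modular
      (fun U hU V hV => FinMatroid.union_mem_tightSets_and_inter hyP hU hV)
      (fun U V => sum_union_inter) fun U hU =>
        (dotForm_constraintRow_inr_inl (hCYE U hU)).symm.trans (hrow (.inr (.inl U)) hU)

theorem linearIndepOn_constraintRow_ground (hX : EX.Nonempty)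
    (hY : EY.Nonempty) (hZ : EZ.Nonempty) :
    LinearIndepOn ℝ (constraintRow EZ) {.inl EX, .inr (.inl EY), .inr (.inr (.inr (.inr ())))} := by
  rw [linearIndepOn_insert (by simp), linearIndepOn_insert (by simp), linearIndepOn_singleton_iff]
  refine ⟨⟨fun h => chi_ne_zero hZ (congrArg (·.2.1) h), fun h => ?_⟩, fun h => ?_⟩
  · have := Submodule.span_le (p := LinearMap.ker (LinearMap.snd ℝ _ _ ∘ₗ LinearMap.snd ℝ _ _)).2
      (by simp [constraintRow]) h
    exact chi_ne_zero hY (by simpa [constraintRow] using this)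
  · have := Submodule.span_le (p := LinearMap.ker (LinearMap.fst ℝ _ _)).2
      (by simp [Set.image_insert_eq, Set.insert_subset_iff, constraintRow]) h
    exact chi_ne_zero hX (by simpa [constraintRow] using this)

theorem LinearIndepOn.linearIndependent_constraintRow_comp_rowEmbedding
    (hI : LinearIndepOn ℝ (constraintRow EZ) (rowIndices Lx Ly Exz Ezy)) :
    LinearIndependent ℝ (constraintRow EZ ∘ rowEmbedding Lx Ly Exz Ezy) :=
  (linearIndepOn_range_iff rowEmbedding_injective _).1 (range_rowEmbedding ▸ hI)

theorem finrank_span_constraintRow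
    (hI : LinearIndepOn ℝ (constraintRow EZ) (rowIndices Lx Ly Exz Ezy)) :
    Module.finrank ℝ (Submodule.span ℝ (constraintRow EZ '' rowIndices Lx Ly Exz Ezy)) =
      Lx.card + Ly.card + Exz.card + Ezy.card + 1 := by
  rw [← range_rowEmbedding, ← Set.range_comp,
    finrank_span_eq_card hI.linearIndependent_constraintRow_comp_rowEmbedding]
  simp only [Fintype.card_sum, Fintype.card_coe, Fintype.card_unit, add_assoc]

end ConstraintRows

theorem vertex_characterization_LP_RRMB_general {α : Type*} [DecidableEq α]
    (MX MY : FinMatroid α) (EZ : Finset α) (L : ℕ)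
    (hEXne : MX.E.Nonempty) (hEYne : MY.E.Nonempty) (hEZne : EZ.Nonempty)
    (x z y : α → ℝ)
    (hvert : (x, z, y) ∈ Set.extremePoints ℝ (LP_RRMB MX MY EZ L))
    (hx : ∀ e ∈ MX.E, 0 < x e) (hy : ∀ e ∈ MY.E, 0 < y e) (hz : ∀ e ∈ EZ, 0 < z e) :
    ∃ (Lx Ly : Finset (Finset α)) (Exz Ezy : Finset α),
      Lx.Nonempty ∧ Ly.Nonempty ∧ ChainFamily Lx ∧ ChainFamily Ly ∧
      (∀ U ∈ Lx, U ⊆ MX.E ∧ ∑ e ∈ U, x e = (MX.rank U : ℝ)) ∧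
      (∀ U ∈ Ly, U ⊆ MY.E ∧ ∑ e ∈ U, y e = (MY.rank U : ℝ)) ∧
      Exz ⊆ MX.E ∩ EZ ∧ (∀ e ∈ Exz, z e = x e) ∧
      Ezy ⊆ MY.E ∩ EZ ∧ (∀ e ∈ Ezy, z e = y e) ∧
      MX.E.card + EZ.card + MY.E.card
        = Lx.card + Exz.card + Ezy.card + Ly.card + 1 ∧
      LinearIndependent ℝ (Sum.elim
        (fun U : {U // U ∈ Lx} =>
          ((chi U.1, 0, 0) : (α → ℝ) × (α → ℝ) × (α → ℝ)))
        (Sum.elim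
          (fun U : {U // U ∈ Ly} =>
            ((0, 0, chi U.1) : (α → ℝ) × (α → ℝ) × (α → ℝ)))
          (Sum.elim
            (fun e : {e // e ∈ Exz} =>
              ((-(chi {e.1}), chi {e.1}, 0) : (α → ℝ) × (α → ℝ) × (α → ℝ)))
            (Sum.elim
              (fun e : {e // e ∈ Ezy} =>
                ((0, chi {e.1}, -(chi {e.1})) : (α → ℝ) × (α → ℝ) × (α → ℝ)))
              (fun _ : Unit =>
                ((0, chi EZ, 0) : (α → ℝ) × (α → ℝ) × (α → ℝ))))))) := by
  obtain ⟨hxP, hyP, -⟩ := mem_LP_RRMB_iff.1 hvert.1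
  obtain ⟨CX, hCX⟩ := exists_maximal_chainFamily (MX.tightSets x)
  obtain ⟨CY, hCY⟩ := exists_maximal_chainFamily (MY.tightSets y)
  obtain ⟨I, hIJ, hseed, hspan, hI⟩ := exists_linearIndepOn_extension
    (linearIndepOn_constraintRow_ground hEXne hEYne hEZne)
    (t := rowIndices CX CY ((MX.E ∩ EZ).filter fun e => z e = x e)
      ((MY.E ∩ EZ).filter fun e => z e = y e))
    (by simp [Set.insert_subset_iff, rowIndices, FinMatroid.ground_mem_of_maximal hxP hCX,
      FinMatroid.ground_mem_of_maximal hyP hCY])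
  obtain ⟨Lx, hLx, Ly, hLy, Exz, hExz, Ezy, hEzy, rfl⟩ :=
    exists_rowIndices_eq hIJ (hseed (by simp))
  have hcard := finrank_span_constraintRow hI
  rw [le_antisymm (Submodule.span_mono (Set.image_mono hIJ)) (Submodule.span_le.2 hspan),
    span_constraintRow_eq_supportSubspace hvert hx hy hz hCX hCY, finrank_supportSubspace] at hcard
  refine ⟨Lx, Ly, Exz, Ezy, ⟨MX.E, hseed (Set.mem_insert (Sum.inl MX.E) _)⟩,
    ⟨MY.E, hseed (Set.mem_insert_of_mem _ (Set.mem_insert (Sum.inr (Sum.inl MY.E)) _))⟩,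
    hCX.1.2.mono hLx, hCY.1.2.mono hLy,
    fun U hU => FinMatroid.mem_tightSets.1 (hCX.1.1 (hLx hU)),
    fun U hU => FinMatroid.mem_tightSets.1 (hCY.1.1 (hLy hU)),
    hExz.trans (filter_subset _ _), fun e he => (mem_filter.1 (hExz he)).2,
    hEzy.trans (filter_subset _ _), fun e he => (mem_filter.1 (hEzy he)).2, by omega, ?_⟩
  convert hI.linearIndependent_constraintRow_comp_rowEmbedding using 1
  funext i
  rcases i with U | U | e | e | u <;> rfl

/-- A vertex solution `(x, z, y)` of `LP_RRMB` with all coordinates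
on `E_X`, `E_Y`, `E_Z` strictly positive admits nonempty chain families
`L(x) ⊆ F(x)`, `L(y) ⊆ F(y)` of tight sets and subsets `E(x,z) ⊆ E(x,z)*`,
`E(z,y) ⊆ E(z,y)*` of tight elements such that
(i) `|E_X| + |E_Z| + |E_Y| = |L(x)| + |E(x,z)| + |E(z,y)| + |L(y)| + 1`, and
(ii) the corresponding vectors, together with `χ_Z(E_Z)`, are linearly independent. -/
theorem vertex_characterization_LP_RRMB {α : Type*} [DecidableEq α]
    (MX MY : FinMatroid α) (EZ : Finset α) (L : ℕ)
    (hEXne : MX.E.Nonempty) (hEYne : MY.E.Nonempty) (hEZne : EZ.Nonempty)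
    (hEZ : EZ ⊆ MX.E ∪ MY.E) (hL : L ≤ EZ.card)
    (x z y : α → ℝ)
    (hvert : (x, z, y) ∈ Set.extremePoints ℝ (LP_RRMB MX MY EZ L))
    (hx : ∀ e ∈ MX.E, 0 < x e) (hy : ∀ e ∈ MY.E, 0 < y e) (hz : ∀ e ∈ EZ, 0 < z e) :
    ∃ (Lx Ly : Finset (Finset α)) (Exz Ezy : Finset α),
      Lx.Nonempty ∧ Ly.Nonempty ∧ ChainFamily Lx ∧ ChainFamily Ly ∧
      (∀ U ∈ Lx, U ⊆ MX.E ∧ ∑ e ∈ U, x e = (MX.rank U : ℝ)) ∧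
      (∀ U ∈ Ly, U ⊆ MY.E ∧ ∑ e ∈ U, y e = (MY.rank U : ℝ)) ∧
      Exz ⊆ MX.E ∩ EZ ∧ (∀ e ∈ Exz, z e = x e) ∧
      Ezy ⊆ MY.E ∩ EZ ∧ (∀ e ∈ Ezy, z e = y e) ∧
      MX.E.card + EZ.card + MY.E.card
        = Lx.card + Exz.card + Ezy.card + Ly.card + 1 ∧
      LinearIndependent ℝ (Sum.elim
        (fun U : {U // U ∈ Lx} =>
          ((chi U.1, 0, 0) : (α → ℝ) × (α → ℝ) × (α → ℝ)))
        (Sum.elim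
          (fun U : {U // U ∈ Ly} =>
            ((0, 0, chi U.1) : (α → ℝ) × (α → ℝ) × (α → ℝ)))
          (Sum.elim
            (fun e : {e // e ∈ Exz} =>
              ((-(chi {e.1}), chi {e.1}, 0) : (α → ℝ) × (α → ℝ) × (α → ℝ)))
            (Sum.elim
              (fun e : {e // e ∈ Ezy} =>
                ((0, chi {e.1}, -(chi {e.1})) : (α → ℝ) × (α → ℝ) × (α → ℝ)))
              (fun _ : Unit =>
                ((0, chi EZ, 0) : (α → ℝ) × (α → ℝ) × (α → ℝ))))))) :=
  vertex_characterization_LP_RRMB_general MX MY EZ L hEXne hEYne hEZne x z y hvert hx hy hz
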